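/- Let (a_n)_{n∈ℕ} and (b_n)_{n∈ℕ} be bounded sequences of nonzero complex numbers, let A and B be the diagonal operators on K = ℓ²(ℕ) with diagonals (a_n)_n and (b_n)_n respectively, and put H = K ⊕ K. Then: (i) if ran A is closed and ran B is not closed, then the systems (H; K ⊕ 0, graph(A)) and (H; K ⊕ 0, graph(B)) are not algebraically isomorphic; (ii) if ran A and ran B are both closed or both non-closed, then the systems (H; K ⊕ 0, graph(A)) and (H; K ⊕ 0, graph(B)) are algebraically isomorphic. -/

import Mathlib

/- STATEMENT 8: Let A, B be the diagonal operators on K = ℓ²(ℕ) with bounded nonzero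
diagonals (aₙ), (bₙ) and H = K ⊕ K. (i) If ran A is closed and ran B is not, then
(H; K ⊕ 0, graph A) and (H; K ⊕ 0, graph B) are not algebraically isomorphic.
(ii) If ran A and ran B are both closed or both non-closed, then they are
algebraically isomorphic. -/

noncomputable section

abbrev K : Type := lp (fun _ : ℕ => ℂ) 2

/-- The graph of the diagonal operator with diagonals `a`, as a subspace of `K × K`. -/
def diagGraph (a : ℕ → ℂ) : Submodule ℂ (K × K) where
  carrier := {p | ∀ n, p.2 n = a n * p.1 n}
  add_mem' := by
    intro p q hp hq n
    simp only [Prod.snd_add, Prod.fst_add, lp.coeFn_add, Pi.add_apply, hp n, hq n]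
    ring
  zero_mem' := by
    intro n
    simp [lp.coeFn_zero]
  smul_mem' := by
    intro c p hp n
    simp only [Prod.smul_snd, Prod.smul_fst, lp.coeFn_smul, Pi.smul_apply, hp n, smul_eq_mul]
    ring

/-- The range of the diagonal operator with diagonals `a`, as a subspace of `K`. -/
def diagRange (a : ℕ → ℂ) : Submodule ℂ K where
  carrier := {y | ∃ x : K, ∀ n, y n = a n * x n}
  add_mem' := by
    rintro y z ⟨x, hx⟩ ⟨w, hw⟩
    refine ⟨x + w, fun n => ?_⟩
    simp only [lp.coeFn_add, Pi.add_apply, hx n, hw n]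
    ring
  zero_mem' := ⟨0, fun n => by simp [lp.coeFn_zero]⟩
  smul_mem' := by
    rintro c y ⟨x, hx⟩
    refine ⟨c • x, fun n => ?_⟩
    simp only [lp.coeFn_smul, Pi.smul_apply, hx n, smul_eq_mul]
    ring

/-- The subspace K ⊕ 0 of K ⊕ K. -/
def firstSummand : Submodule ℂ (K × K) := (⊤ : Submodule ℂ K).prod (⊥ : Submodule ℂ K)

/-!
`K ⊕ 0` and `graph A` intersect trivially and span `K ⊕ ran A`, and `graph A ≅ K`; so a linear
automorphism of `H` carrying one such pair onto another exists exactly when `ran A` and `ran B`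
have the same codimension in `K`. A diagonal operator with nonzero diagonal has dense range, so a
closed range is all of `K`. A non-closed range has codimension `𝔠 = #K`: along a subsequence with
`|a (n k)| < 2⁻ᵏ`, the vectors `(|a (n k)| ^ t)ₖ`, `1/2 < t < 1`, are independent modulo `ran A`,
since a relation `Σ c_t |a (n k)| ^ t = O(|a (n k)|)` between distinct exponents below `1` forces
`c = 0`.
-/

open Filter Topology Asymptotics
open scoped Cardinal ENNReal

section Asymptotics

variable {α ι E : Type*} [NormedAddCommGroup E] [NormedSpace ℝ E] {l : Filter α}
  {ε : α → ℝ}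

theorem isLittleO_rpow_rpow_of_lt (hε : Tendsto ε l (𝓝[>] 0)) {s t : ℝ} (hst : s < t) :
    (fun x => ε x ^ t) =o[l] fun x => ε x ^ s := by
  have hlim : Tendsto (fun x : ℝ => x ^ (t - s)) (𝓝[>] 0) (𝓝 0) := by
    simpa [Real.zero_rpow (sub_pos.2 hst).ne'] using
      (Real.continuousAt_rpow_const 0 _ (Or.inr (sub_pos.2 hst).le)).tendsto.mono_left
        nhdsWithin_le_nhds
  have h₀ : (fun x : ℝ => x ^ t) =o[𝓝[>] 0] fun x => x ^ s := by
    refine (isLittleO_iff_tendsto' ?_).2 (hlim.congr' ?_)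
    · filter_upwards [self_mem_nhdsWithin] with x hx hx0
      exact absurd hx0 (Real.rpow_pos_of_pos hx s).ne'
    · filter_upwards [self_mem_nhdsWithin] with x hx
      rw [Real.rpow_sub hx]
  exact h₀.comp_tendsto hε

theorem eq_zero_of_rpow_smul_isLittleO [l.NeBot] (hε : Tendsto ε l (𝓝[>] 0)) {r : ℝ} {c : E}
    (h : (fun x => ε x ^ r • c) =o[l] fun x => ε x ^ r) : c = 0 := by
  by_contra hc
  have hpos : ∀ᶠ x in l, 0 < ε x := hε self_mem_nhdsWithin
  refine isLittleO_irrefl (hpos.frequently.mono fun x hx => (Real.rpow_pos_of_pos hx r).ne')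
    ((IsBigO.of_bound ‖c‖⁻¹ (Eventually.of_forall fun x => ?_)).trans_isLittleO h)
  rw [norm_smul, mul_left_comm, inv_mul_cancel₀ (norm_ne_zero_iff.2 hc), mul_one]

theorem eq_zero_of_sum_rpow_smul_isBigO [LinearOrder ι] [l.NeBot] (hε : Tendsto ε l (𝓝[>] 0))
    {e : ι → ℝ} (he : StrictMono e) {s : Finset ι} (hs : ∀ i ∈ s, e i < 1) {g : ι → E}
    (h : (fun x => ∑ i ∈ s, ε x ^ e i • g i) =O[l] ε) : ∀ i ∈ s, g i = 0 := by
  induction s using Finset.induction_on_min with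
  | empty => simp
  | insert i s hi ih =>
    -- `i` carries the smallest exponent: every other term, and `ε` itself, is `o(ε ^ e i)`.
    have his : i ∉ s := fun h => (hi i h).false
    have hε_small : ε =o[l] fun x => ε x ^ e i := by
      simpa using isLittleO_rpow_rpow_of_lt hε (hs i (Finset.mem_insert_self i s))
    have hterm : ∀ j ∈ s, (fun x => ε x ^ e j • g j) =o[l] fun x => ε x ^ e i :=
      fun j hj => ((isLittleO_rpow_rpow_of_lt hε (he (hi j hj))).smul_isBigO
        (isBigO_const_const (g j) (one_ne_zero (α := ℝ)) l)).congr_right fun x => by simp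
    have hrest : (fun x => ∑ j ∈ s, ε x ^ e j • g j) =o[l] fun x => ε x ^ e i := by
      simpa only [Finset.sum_fn] using IsLittleO.sum hterm
    have hgi : g i = 0 := by
      refine eq_zero_of_rpow_smul_isLittleO hε
        (((h.trans_isLittleO hε_small).sub hrest).congr_left fun x => ?_)
      simp [Finset.sum_insert his]
    have hs' : (fun x => ∑ j ∈ s, ε x ^ e j • g j) =O[l] ε := by
      simpa [Finset.sum_insert his, hgi] using h
    intro j hj
    rcases Finset.mem_insert.1 hj with rfl | hj
    · exact hgi
    · exact ih (fun j hj => hs j (Finset.mem_insert_of_mem hj)) hs' j hj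

end Asymptotics

section Lp

variable {α β E : Type*} [NormedAddCommGroup E] {p : ℝ≥0∞}

theorem Memℓp.mono_cofinite (hp : 0 < p.toReal) {f : α → E} {g : α → ℝ} (hg : Memℓp g p)
    (hfg : ∀ᶠ i in cofinite, ‖f i‖ ≤ g i) : Memℓp f p := by
  rw [memℓp_gen_iff hp] at hg ⊢
  refine hg.of_norm_bounded_eventually (hfg.mono fun i hi => ?_)
  rw [Real.norm_eq_abs, abs_of_nonneg (by positivity), Real.norm_eq_abs,
    abs_of_nonneg ((norm_nonneg _).trans hi)]
  gcongr

theorem memℓp_indicator_range_iff (hp : 0 < p.toReal) {φ : β → α}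
    (hφ : Function.Injective φ) {f : α → E} :
    Memℓp ((Set.range φ).indicator f) p ↔ Memℓp (f ∘ φ) p := by
  rw [memℓp_gen_iff hp, memℓp_gen_iff hp, ← hφ.summable_iff fun i hi => by
    simp [Set.indicator_of_notMem hi, Real.zero_rpow hp.ne']]
  simp [Function.comp_def]

end Lp

section SubspacePairs

variable {R M N : Type*}

section Ring

variable [Ring R] [AddCommGroup M] [Module R M] [AddCommGroup N] [Module R N]

def quotientTopProdEquiv (p : Submodule R N) :
    ((M × N) ⧸ (⊤ : Submodule R M).prod p) ≃ₗ[R] N ⧸ p :=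
  (Submodule.quotEquivOfEq _ _
      (by rw [LinearMap.ker_comp, Submodule.ker_mkQ, Submodule.comap_snd])).trans
    (LinearMap.quotKerEquivOfSurjective (p.mkQ ∘ₗ LinearMap.snd R M N)
      ((Submodule.mkQ_surjective p).comp Prod.snd_surjective))

theorem bijective_coprod_subtype_of_isCompl_sup {E F W : Submodule R M} (hEF : Disjoint E F)
    (hW : IsCompl (E ⊔ F) W) :
    Function.Bijective (E.subtype.coprod (F.subtype.coprod W.subtype)) := by
  have hFW : Disjoint (LinearMap.range F.subtype) (LinearMap.range W.subtype) := by
    simpa using hW.disjoint.mono_left le_sup_right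
  have hEFW :
      Disjoint (LinearMap.range E.subtype) (LinearMap.range (F.subtype.coprod W.subtype)) := by
    simpa [LinearMap.range_coprod] using hEF.disjoint_sup_right_of_disjoint_sup_left hW.disjoint
  constructor
  · rw [← LinearMap.ker_eq_bot, LinearMap.ker_coprod_of_disjoint_range _ _ hEFW,
      LinearMap.ker_coprod_of_disjoint_range _ _ hFW]
    simp
  · rw [← LinearMap.range_eq_top, LinearMap.range_coprod, LinearMap.range_coprod]
    simpa [← sup_assoc] using hW.sup_eq_top

theorem map_eq_iff_image_eq {E E' : Submodule R M} {V : M ≃ₗ[R] M} :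
    E.map (V : M →ₗ[R] M) = E' ↔ V '' E = E' := by
  rw [← SetLike.coe_set_eq, Submodule.map_coe, LinearEquiv.coe_coe]

theorem map_eq_of_forall_apply_eq {E E' : Submodule R M} (V : M ≃ₗ[R] M) (e : E ≃ₗ[R] E')
    (h : ∀ x : E, V x = e x) : E.map (V : M →ₗ[R] M) = E' := by
  ext y
  constructor
  · rintro ⟨x, hx, rfl⟩
    simp [h ⟨x, hx⟩]
  · intro hy
    exact ⟨e.symm ⟨y, hy⟩, (e.symm ⟨y, hy⟩).2, by simp [h]⟩

end Ring

variable [DivisionRing R] [AddCommGroup M] [Module R M]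

theorem exists_linearEquiv_map_eq_of_disjoint {E F E' F' : Submodule R M} (hEF : Disjoint E F)
    (hEF' : Disjoint E' F') (e : E ≃ₗ[R] E') (f : F ≃ₗ[R] F')
    (hcodim : Module.rank R (M ⧸ E ⊔ F) = Module.rank R (M ⧸ E' ⊔ F')) :
    ∃ V : M ≃ₗ[R] M, E.map (V : M →ₗ[R] M) = E' ∧ F.map (V : M →ₗ[R] M) = F' := by
  obtain ⟨W, hW⟩ := (E ⊔ F).exists_isCompl
  obtain ⟨W', hW'⟩ := (E' ⊔ F').exists_isCompl
  obtain ⟨w⟩ : Nonempty (W ≃ₗ[R] W') := nonempty_linearEquiv_of_rank_eq <| by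
    rw [← (Submodule.quotientEquivOfIsCompl _ _ hW).rank_eq,
      ← (Submodule.quotientEquivOfIsCompl _ _ hW').rank_eq, hcodim]
  let Φ := LinearEquiv.ofBijective _ (bijective_coprod_subtype_of_isCompl_sup hEF hW)
  let Φ' := LinearEquiv.ofBijective _ (bijective_coprod_subtype_of_isCompl_sup hEF' hW')
  let V := Φ.symm ≪≫ₗ e.prodCongr (f.prodCongr w) ≪≫ₗ Φ'
  refine ⟨V, map_eq_of_forall_apply_eq V e fun x => ?_,
    map_eq_of_forall_apply_eq V f fun x => ?_⟩
  · have hx : (x : M) = Φ (x, 0, 0) := by simp [Φ]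
    simp [V, hx, Φ']
  · have hx : (x : M) = Φ (0, x, 0) := by simp [Φ]
    simp [V, hx, Φ']

end SubspacePairs

section DiagonalOperator

variable {a : ℕ → ℂ}

theorem mem_firstSummand {p : K × K} : p ∈ firstSummand ↔ p.2 = 0 := by
  simp [firstSummand, Submodule.mem_prod]

theorem disjoint_firstSummand_diagGraph (ha : ∀ n, a n ≠ 0) :
    Disjoint firstSummand (diagGraph a) := by
  rw [Submodule.disjoint_def]
  rintro ⟨u, v⟩ hE hG
  obtain rfl : v = 0 := mem_firstSummand.1 hE
  have hu : u = 0 := lp.ext <| funext fun n =>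
    (mul_eq_zero.1 (hG n).symm).resolve_left (ha n)
  rw [hu, Prod.mk_zero_zero]

theorem firstSummand_sup_diagGraph (a : ℕ → ℂ) :
    firstSummand ⊔ diagGraph a = (⊤ : Submodule ℂ K).prod (diagRange a) := by
  refine le_antisymm (sup_le ?_ ?_) ?_
  · rintro ⟨u, v⟩ hp
    exact ⟨trivial, mem_firstSummand.1 hp ▸ zero_mem _⟩
  · rintro ⟨u, v⟩ hp
    exact ⟨trivial, u, hp⟩
  · rintro ⟨u, v⟩ ⟨-, x, hx⟩
    have hE : ((u - x, 0) : K × K) ∈ firstSummand := mem_firstSummand.2 rfl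
    have hG : ((x, v) : K × K) ∈ diagGraph a := hx
    simpa using Submodule.add_mem_sup hE hG

def diagGraphEquivOfBounded (ha : ∃ C : ℝ, ∀ n, ‖a n‖ ≤ C) : diagGraph a ≃ₗ[ℂ] K := by
  refine .ofBijective ((LinearMap.fst ℂ K K).comp (diagGraph a).subtype) ⟨?_, fun u => ?_⟩
  · rintro ⟨⟨u, v⟩, hp⟩ ⟨⟨u', v'⟩, hp'⟩ (rfl : u = u')
    have hv : v = v' := lp.ext <| funext fun n => by rw [hp n, hp' n]
    simp [hv]
  · obtain ⟨C, hC⟩ := ha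
    have hAu : Memℓp (fun n => a n * u n) 2 :=
      ((lp.memℓp u).norm.const_mul C).mono fun n => by
        rw [norm_mul]
        exact mul_le_mul_of_nonneg_right (hC n) (norm_nonneg _)
    exact ⟨⟨(u, ⟨_, hAu⟩), fun n => rfl⟩, rfl⟩

theorem single_mem_diagRange {i : ℕ} (hi : a i ≠ 0) (c : ℂ) :
    lp.single 2 i c ∈ diagRange a := by
  refine ⟨lp.single 2 i (c / a i), fun n => ?_⟩
  rcases eq_or_ne n i with rfl | hn
  · simp [mul_div_cancel₀ _ hi]
  · simp [Pi.single_eq_of_ne hn]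

theorem dense_diagRange (ha : ∀ n, a n ≠ 0) : Dense (diagRange a : Set K) := by
  have : Fact ((1 : ℝ≥0∞) ≤ 2) := ⟨by norm_num⟩
  intro f
  refine mem_closure_of_tendsto (lp.hasSum_single (by norm_num) f)
    (Eventually.of_forall fun s => ?_)
  exact sum_mem fun i _ => single_mem_diagRange (ha i) (f i)

theorem diagRange_eq_top_of_isClosed (ha : ∀ n, a n ≠ 0)
    (h : IsClosed (diagRange a : Set K)) : diagRange a = ⊤ :=
  SetLike.coe_injective <| by rw [← h.closure_eq, (dense_diagRange ha).closure_eq]; rfl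

theorem diagRange_eq_top_of_eventually_le (ha : ∀ n, a n ≠ 0) {δ : ℝ} (hδ : 0 < δ)
    (h : ∀ᶠ n in atTop, δ ≤ ‖a n‖) : diagRange a = ⊤ := by
  refine Submodule.eq_top_iff'.2 fun v => ?_
  have hx : Memℓp (fun n => v n / a n) 2 := by
    refine Memℓp.mono_cofinite (by norm_num) ((lp.memℓp v).norm.const_mul δ⁻¹) ?_
    rw [Nat.cofinite_eq_atTop]
    filter_upwards [h] with n hn
    rw [norm_div, div_eq_inv_mul]
    gcongr
  exact ⟨⟨_, hx⟩, fun n => (mul_div_cancel₀ _ (ha n)).symm⟩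

theorem frequently_norm_lt_of_not_isClosed (ha : ∀ n, a n ≠ 0)
    (h : ¬IsClosed (diagRange a : Set K)) {δ : ℝ} (hδ : 0 < δ) :
    ∃ᶠ n in atTop, ‖a n‖ < δ := by
  contrapose! h
  rw [diagRange_eq_top_of_eventually_le ha hδ (by simpa using h), Submodule.top_coe]
  exact isClosed_univ

def rpowAlong (a : ℕ → ℂ) (φ : ℕ → ℕ) (t : ℝ) : ℕ → ℂ :=
  (Set.range φ).indicator fun m => ((‖a m‖ ^ t : ℝ) : ℂ)

theorem rpowAlong_apply_self (a : ℕ → ℂ) (φ : ℕ → ℕ) (t : ℝ) (k : ℕ) :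
    rpowAlong a φ t (φ k) = ((‖a (φ k)‖ ^ t : ℝ) : ℂ) :=
  Set.indicator_of_mem (Set.mem_range_self k) _

theorem memℓp_rpowAlong {φ : ℕ → ℕ} (hφ : Function.Injective φ)
    (hsmall : ∀ k, ‖a (φ k)‖ < 2⁻¹ ^ k) {t : ℝ} (ht : 2⁻¹ ≤ t) :
    Memℓp (rpowAlong a φ t) 2 := by
  rw [rpowAlong, memℓp_indicator_range_iff (by norm_num) hφ, memℓp_gen_iff (by norm_num)]
  refine Summable.of_nonneg_of_le (fun k => by positivity) (fun k => ?_)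
    (summable_geometric_of_lt_one (by norm_num) (by norm_num : (2⁻¹ : ℝ) < 1))
  have hle : ‖a (φ k)‖ ≤ 1 := (hsmall k).le.trans (pow_le_one₀ (by norm_num) (by norm_num))
  calc ‖((‖a (φ k)‖ ^ t : ℝ) : ℂ)‖ ^ (2 : ℝ≥0∞).toReal = ‖a (φ k)‖ ^ (t * 2) := by
        rw [Complex.norm_real, Real.norm_of_nonneg (by positivity),
          ← Real.rpow_mul (norm_nonneg _)]
        norm_num
    _ ≤ ‖a (φ k)‖ ^ (1 : ℝ) :=
        Real.rpow_le_rpow_of_exponent_ge' (norm_nonneg _) hle zero_le_one (by linarith)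
    _ ≤ 2⁻¹ ^ k := by simpa using (hsmall k).le

theorem linearIndependent_mkQ_rpowAlong (ha : ∀ n, a n ≠ 0) {φ : ℕ → ℕ} (hφ : StrictMono φ)
    (hsmall : ∀ k, ‖a (φ k)‖ < 2⁻¹ ^ k) :
    LinearIndependent ℂ fun t : Set.Ioo (2⁻¹ : ℝ) 1 =>
      (diagRange a).mkQ (⟨rpowAlong a φ t, memℓp_rpowAlong hφ.injective hsmall t.2.1.le⟩ : K) := by
  rw [linearIndependent_iff']
  intro s c hsum
  obtain ⟨x, hx⟩ : ∑ t ∈ s, c t •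
      (⟨rpowAlong a φ t, memℓp_rpowAlong hφ.injective hsmall t.2.1.le⟩ : K) ∈ diagRange a := by
    rw [← Submodule.Quotient.mk_eq_zero, ← Submodule.mkQ_apply, map_sum]
    simpa only [map_smul] using hsum
  have hε : Tendsto (fun k => ‖a (φ k)‖) atTop (𝓝[>] 0) :=
    tendsto_nhdsWithin_iff.2 ⟨squeeze_zero (fun _ => norm_nonneg _) (fun k => (hsmall k).le)
      (tendsto_pow_atTop_nhds_zero_of_lt_one (by norm_num) (by norm_num)),
      Eventually.of_forall fun k => norm_pos_iff.2 (ha _)⟩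
  -- A relation `Σ c_t y_t = A x` read at the coordinates `φ k` is a bound `O(‖a (φ k)‖)`.
  refine eq_zero_of_sum_rpow_smul_isBigO hε (Subtype.strictMono_coe _) (fun t _ => t.2.2)
    (IsBigO.of_bound ‖x‖ (Eventually.of_forall fun k => ?_))
  have hcoord := hx (φ k)
  simp only [lp.coeFn_sum, lp.coeFn_smul, Finset.sum_apply, Pi.smul_apply, smul_eq_mul,
    rpowAlong_apply_self] at hcoord
  calc ‖∑ t ∈ s, ‖a (φ k)‖ ^ (t : ℝ) • c t‖ = ‖a (φ k) * x (φ k)‖ := by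
        simp only [← hcoord, Complex.real_smul, mul_comm]
    _ ≤ ‖x‖ * ‖‖a (φ k)‖‖ := by
        rw [norm_mul, norm_norm, mul_comm]
        gcongr
        exact lp.norm_apply_le_norm two_ne_zero x _

theorem rank_quotient_diagRange_of_not_isClosed (ha : ∀ n, a n ≠ 0)
    (h : ¬IsClosed (diagRange a : Set K)) : Module.rank ℂ (K ⧸ diagRange a) = 𝔠 := by
  obtain ⟨φ, hφ, hsmall⟩ := extraction_forall_of_frequently fun k =>
    frequently_norm_lt_of_not_isClosed ha h (pow_pos (by norm_num : (0 : ℝ) < 2⁻¹) k)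
  refine le_antisymm ?_ ?_
  · calc Module.rank ℂ (K ⧸ diagRange a) ≤ Module.rank ℂ K := rank_quotient_le _
      _ ≤ Cardinal.mk K := rank_le_card _ _
      _ ≤ Cardinal.mk (ℕ → ℂ) := Cardinal.mk_le_of_injective fun _ _ => lp.ext
      _ = 𝔠 := by simp
  · rw [← Cardinal.mk_Ioo_real (by norm_num : (2⁻¹ : ℝ) < 1)]
    exact (linearIndependent_mkQ_rpowAlong ha hφ hsmall).cardinal_le_rank

end DiagonalOperator

theorem algebraically_isomorphic_iff_ranges_both_closed_or_both_nonclosed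
    (a b : ℕ → ℂ)
    (ha_bdd : ∃ C : ℝ, ∀ n, ‖a n‖ ≤ C) (hb_bdd : ∃ C : ℝ, ∀ n, ‖b n‖ ≤ C)
    (ha_ne : ∀ n, a n ≠ 0) (hb_ne : ∀ n, b n ≠ 0) :
    -- (i)
    ((IsClosed ((diagRange a) : Set K) ∧ ¬ IsClosed ((diagRange b) : Set K)) →
      ¬ ∃ V : (K × K) ≃ₗ[ℂ] (K × K),
          V '' (firstSummand : Set (K × K)) = (firstSummand : Set (K × K)) ∧
          V '' ((diagGraph a) : Set (K × K)) = ((diagGraph b) : Set (K × K))) ∧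
    -- (ii)
    ((IsClosed ((diagRange a) : Set K) ↔ IsClosed ((diagRange b) : Set K)) →
      ∃ V : (K × K) ≃ₗ[ℂ] (K × K),
        V '' (firstSummand : Set (K × K)) = (firstSummand : Set (K × K)) ∧
        V '' ((diagGraph a) : Set (K × K)) = ((diagGraph b) : Set (K × K))) := by
  refine ⟨fun ⟨hA, hB⟩ ⟨V, hE, hG⟩ => hB ?_, fun hiff => ?_⟩
  · rw [← map_eq_iff_image_eq] at hE hG
    have hsup : firstSummand ⊔ diagGraph b = ⊤ := by
      rw [← hE, ← hG, ← Submodule.map_sup, firstSummand_sup_diagGraph,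
        diagRange_eq_top_of_isClosed ha_ne hA, Submodule.prod_top, Submodule.map_top,
        LinearEquiv.range]
    rw [firstSummand_sup_diagGraph, Submodule.prod_eq_top_iff] at hsup
    rw [hsup.2, Submodule.top_coe]
    exact isClosed_univ
  · have hcodim : Module.rank ℂ ((K × K) ⧸ firstSummand ⊔ diagGraph a) =
        Module.rank ℂ ((K × K) ⧸ firstSummand ⊔ diagGraph b) := by
      rw [firstSummand_sup_diagGraph, firstSummand_sup_diagGraph,
        (quotientTopProdEquiv _).rank_eq, (quotientTopProdEquiv _).rank_eq]
      by_cases hA : IsClosed (diagRange a : Set K)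
      · rw [diagRange_eq_top_of_isClosed ha_ne hA,
          diagRange_eq_top_of_isClosed hb_ne (hiff.1 hA)]
      · rw [rank_quotient_diagRange_of_not_isClosed ha_ne hA,
          rank_quotient_diagRange_of_not_isClosed hb_ne (hiff.not.1 hA)]
    obtain ⟨V, hE, hG⟩ := exists_linearEquiv_map_eq_of_disjoint
      (disjoint_firstSummand_diagGraph ha_ne) (disjoint_firstSummand_diagGraph hb_ne)
      (LinearEquiv.refl ℂ _)
      ((diagGraphEquivOfBounded ha_bdd).trans (diagGraphEquivOfBounded hb_bdd).symm) hcodim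
    exact ⟨V, map_eq_iff_image_eq.1 hE, map_eq_iff_image_eq.1 hG⟩

end
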